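/- arXiv:2012.04110 — 6 statements merged into one kernel-verified Lean document; each statement's English description precedes it below -/
import Mathlib

section
/- Let $w=e^f$ where $f$ is locally integrable with respect to $\mathscr{G}$. Then $([w]_{A_2})^{1/2} \le \sup_{G\in\mathscr{G}} \fint_G e^{|f-f_G|}\,d\mu \le 2[w]_{A_2}$, where $[w]_{A_2} = \sup_{G\in\mathscr{G}} (\fint_G w\,d\mu)(\fint_G w^{-1}\,d\mu)$. -/
/-!
Shifting by any constant `c`, the pointwise bounds `e^{±(f - c)} ≤ e^{|f - c|}` give
`(⨍ e^f)(⨍ e^{-f}) ≤ (⨍ e^{|f - c|})²`. Conversely `e^{|t|} ≤ e^t + e^{-t}`, and for `c = f_G`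
Jensen's inequality `e^{±f_G} ≤ ⨍_G e^{±f}` bounds each of the two resulting terms by
`(⨍_G e^f)(⨍_G e^{-f})`.
-/

open MeasureTheory ENNReal Real

namespace MeasureTheory

variable {α : Type*} [MeasurableSpace α] {ν : Measure α}

lemma ofReal_exp_mul_laverage (a : ℝ) (g : α → ℝ) :
    ENNReal.ofReal (exp a) * ⨍⁻ x, ENNReal.ofReal (exp (g x)) ∂ν =
      ⨍⁻ x, ENNReal.ofReal (exp (a + g x)) ∂ν := by
  simp_rw [exp_add, ENNReal.ofReal_mul (exp_pos a).le]
  rw [laverage_eq, laverage_eq, lintegral_const_mul' _ _ ofReal_ne_top, mul_div_assoc]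

lemma laverage_exp_mul_laverage_exp_neg_le_sq (g : α → ℝ) (c : ℝ) :
    (⨍⁻ x, ENNReal.ofReal (exp (g x)) ∂ν) * (⨍⁻ x, ENNReal.ofReal (exp (-g x)) ∂ν) ≤
      (⨍⁻ x, ENNReal.ofReal (exp |g x - c|) ∂ν) ^ 2 := by
  set S := ⨍⁻ x, ENNReal.ofReal (exp |g x - c|) ∂ν
  have h_pos : ENNReal.ofReal (exp (-c)) * ⨍⁻ x, ENNReal.ofReal (exp (g x)) ∂ν ≤ S := by
    rw [ofReal_exp_mul_laverage]
    refine laverage_mono_ae (.of_forall fun x ↦ ofReal_le_ofReal (exp_le_exp.2 ?_))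
    linarith [le_abs_self (g x - c)]
  have h_neg : ENNReal.ofReal (exp c) * ⨍⁻ x, ENNReal.ofReal (exp (-g x)) ∂ν ≤ S := by
    rw [ofReal_exp_mul_laverage]
    refine laverage_mono_ae (.of_forall fun x ↦ ofReal_le_ofReal (exp_le_exp.2 ?_))
    linarith [neg_abs_le (g x - c)]
  calc (⨍⁻ x, ENNReal.ofReal (exp (g x)) ∂ν) * (⨍⁻ x, ENNReal.ofReal (exp (-g x)) ∂ν)
      = (ENNReal.ofReal (exp (-c)) * ⨍⁻ x, ENNReal.ofReal (exp (g x)) ∂ν) *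
          (ENNReal.ofReal (exp c) * ⨍⁻ x, ENNReal.ofReal (exp (-g x)) ∂ν) := by
        rw [mul_mul_mul_comm, ← ENNReal.ofReal_mul (exp_pos _).le, ← exp_add, neg_add_cancel,
          exp_zero, ofReal_one, one_mul]
    _ ≤ S * S := mul_le_mul' h_pos h_neg
    _ = S ^ 2 := (sq S).symm

variable [IsFiniteMeasure ν] [NeZero ν]

lemma ofReal_exp_average_le_laverage {g : α → ℝ} (hg : Integrable g ν)
    (hexp : Integrable (fun x ↦ exp (g x)) ν) :
    ENNReal.ofReal (exp (⨍ x, g x ∂ν)) ≤ ⨍⁻ x, ENNReal.ofReal (exp (g x)) ∂ν := by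
  rw [laverage_eq, ← ofReal_average hexp (.of_forall fun x ↦ (exp_pos _).le)]
  exact ofReal_le_ofReal <| convexOn_exp.map_average_le continuous_exp.continuousOn
    isClosed_univ (.of_forall fun _ ↦ Set.mem_univ _) hg hexp

lemma laverage_exp_abs_sub_average_le {g : α → ℝ} (hg : Integrable g ν)
    (hexp : Integrable (fun x ↦ exp (g x)) ν) (hexp_neg : Integrable (fun x ↦ exp (-g x)) ν) :
    ⨍⁻ x, ENNReal.ofReal (exp |g x - ⨍ y, g y ∂ν|) ∂ν ≤
      2 * ((⨍⁻ x, ENNReal.ofReal (exp (g x)) ∂ν) * ⨍⁻ x, ENNReal.ofReal (exp (-g x)) ∂ν) := by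
  set c := ⨍ y, g y ∂ν
  set A := ⨍⁻ x, ENNReal.ofReal (exp (g x)) ∂ν
  set B := ⨍⁻ x, ENNReal.ofReal (exp (-g x)) ∂ν
  have hA : ENNReal.ofReal (exp c) ≤ A := ofReal_exp_average_le_laverage hg hexp
  have hB : ENNReal.ofReal (exp (-c)) ≤ B := by
    simpa only [c, ← average_neg] using
      ofReal_exp_average_le_laverage (g := fun x ↦ -g x) hg.neg hexp_neg
  have h_meas : AEMeasurable (fun x ↦ ENNReal.ofReal (exp (-c + g x))) ν := by
    have := hg.aemeasurable
    fun_prop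
  calc ⨍⁻ x, ENNReal.ofReal (exp |g x - c|) ∂ν
      ≤ ⨍⁻ x, (ENNReal.ofReal (exp (-c + g x)) + ENNReal.ofReal (exp (c + -g x))) ∂ν := by
        refine laverage_mono_ae (.of_forall fun x ↦ ?_)
        dsimp only
        rw [← ENNReal.ofReal_add (exp_pos _).le (exp_pos _).le]
        refine ofReal_le_ofReal ((exp_abs_le _).trans_eq ?_)
        ring_nf
    _ = ENNReal.ofReal (exp (-c)) * A + ENNReal.ofReal (exp c) * B := by
        rw [ofReal_exp_mul_laverage, ofReal_exp_mul_laverage, laverage_eq, laverage_eq,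
          laverage_eq, lintegral_add_left' h_meas, ENNReal.add_div]
    _ ≤ B * A + A * B := add_le_add (mul_le_mul_left hB A) (mul_le_mul_left hA B)
    _ = 2 * (A * B) := by ring

end MeasureTheory

theorem stmt_4_general {X : Type*} [MeasurableSpace X] (μ : Measure X)
    (𝒢 : Set (Set X))
    (h𝒢 : ∀ G ∈ 𝒢, MeasurableSet G ∧ 0 < μ G ∧ μ G < ∞)
    (f : X → ℝ)
    (hloc : ∀ G ∈ 𝒢, IntegrableOn f G μ)
    (hexp : ∀ G ∈ 𝒢, IntegrableOn (fun x => exp (f x)) G μ ∧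
      IntegrableOn (fun x => exp (-f x)) G μ) :
    (⨆ G ∈ 𝒢, (⨍⁻ x in G, ENNReal.ofReal (exp (f x)) ∂μ) *
        (⨍⁻ x in G, ENNReal.ofReal (exp (-f x)) ∂μ)) ^ ((1 : ℝ) / 2) ≤
      (⨆ G ∈ 𝒢, ⨍⁻ x in G, ENNReal.ofReal (exp (|f x - ⨍ y in G, f y ∂μ|)) ∂μ) ∧
    (⨆ G ∈ 𝒢, ⨍⁻ x in G, ENNReal.ofReal (exp (|f x - ⨍ y in G, f y ∂μ|)) ∂μ) ≤
      2 * ⨆ G ∈ 𝒢, (⨍⁻ x in G, ENNReal.ofReal (exp (f x)) ∂μ) *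
        (⨍⁻ x in G, ENNReal.ofReal (exp (-f x)) ∂μ) := by
  constructor
  · rw [one_div, ENNReal.rpow_inv_le_iff two_pos, ENNReal.rpow_ofNat]
    exact iSup₂_le fun G hG ↦ (laverage_exp_mul_laverage_exp_neg_le_sq f _).trans <|
      pow_le_pow_left' (le_iSup₂ (f := fun G (_ : G ∈ 𝒢) ↦
        ⨍⁻ x in G, ENNReal.ofReal (exp (|f x - ⨍ y in G, f y ∂μ|)) ∂μ) G hG) 2
  · refine iSup₂_le fun G hG ↦ ?_
    obtain ⟨-, hG_pos, hG_fin⟩ := h𝒢 G hG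
    have : IsFiniteMeasure (μ.restrict G) := isFiniteMeasure_restrict.2 hG_fin.ne
    have : NeZero (μ.restrict G) := ⟨Measure.restrict_eq_zero.not.2 hG_pos.ne'⟩
    exact (laverage_exp_abs_sub_average_le (hloc G hG) (hexp G hG).1 (hexp G hG).2).trans <|
      mul_le_mul_right (le_iSup₂ (f := fun G (_ : G ∈ 𝒢) ↦
        (⨍⁻ x in G, ENNReal.ofReal (exp (f x)) ∂μ) *
          ⨍⁻ x in G, ENNReal.ofReal (exp (-f x)) ∂μ) G hG) 2

/-- For `w = e^f` with `f` locally integrable w.r.t. `𝒢`,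
`[w]_{A₂}^{1/2} ≤ sup_G ⨍_G e^{|f - f_G|} ≤ 2 [w]_{A₂}`. -/
theorem stmt_4 {X : Type*} [MeasurableSpace X] (μ : Measure X)
    (𝒢 : Set (Set X))
    (h𝒢 : ∀ G ∈ 𝒢, MeasurableSet G ∧ 0 < μ G ∧ μ G < ∞)
    (f : X → ℝ) (hf : Measurable f)
    (hloc : ∀ G ∈ 𝒢, IntegrableOn f G μ)
    (hexp : ∀ G ∈ 𝒢, IntegrableOn (fun x => exp (f x)) G μ ∧
      IntegrableOn (fun x => exp (-f x)) G μ) :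
    (⨆ G ∈ 𝒢, (⨍⁻ x in G, ENNReal.ofReal (exp (f x)) ∂μ) *
        (⨍⁻ x in G, ENNReal.ofReal (exp (-f x)) ∂μ)) ^ ((1 : ℝ) / 2) ≤
      (⨆ G ∈ 𝒢, ⨍⁻ x in G, ENNReal.ofReal (exp (|f x - ⨍ y in G, f y ∂μ|)) ∂μ) ∧
    (⨆ G ∈ 𝒢, ⨍⁻ x in G, ENNReal.ofReal (exp (|f x - ⨍ y in G, f y ∂μ|)) ∂μ) ≤
      2 * ⨆ G ∈ 𝒢, (⨍⁻ x in G, ENNReal.ofReal (exp (f x)) ∂μ) *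
        (⨍⁻ x in G, ENNReal.ofReal (exp (-f x)) ∂μ) :=
  stmt_4_general μ 𝒢 h𝒢 f hloc hexp
end

section
/- Let $\mathscr{F}\subset\mathcal{M}^*$ be a family of sets of positive finite measure and $A\in\mathcal{M}^*$. If there is no countable subfamily of $\mathscr{F}$ whose union covers $A$ up to a null set, then there exists a measurable set $E\subset A$ with $\mu(E)>0$ such that $\mu(F\cap E)=0$ for every $F\in\mathscr{F}$. -/
open MeasureTheory ENNReal Set

/-! Choose a countable subfamily `𝓖 ⊆ 𝓕` maximising `μ (A ∩ ⋃₀ 𝓖)`: the supremum is attained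
because countable subfamilies are closed under countable unions. Adding any `F ∈ 𝓕` to `𝓖` cannot
increase this finite measure, so `F` meets `E = A \ ⋃₀ 𝓖` in a null set, and `μ E > 0` because
`𝓖` does not essentially cover `A`. -/

theorem Monotone.exists_countable_subset_forall_countable_le {α β : Type*}
    [CompleteLinearOrder β] [TopologicalSpace β] [OrderTopology β] [FirstCountableTopology β]
    {f : Set α → β} (hf : Monotone f) (s : Set α) :
    ∃ t ⊆ s, t.Countable ∧ ∀ u ⊆ s, u.Countable → f u ≤ f t := by
  set S := f '' {u | u ⊆ s ∧ u.Countable}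
  obtain ⟨v, -, hv_lim, hv_mem⟩ :=
    exists_seq_tendsto_sSup (S := S) ⟨f ∅, ∅, ⟨empty_subset s, countable_empty⟩, rfl⟩
      (OrderTop.bddAbove S)
  choose t ht hft using hv_mem
  refine ⟨⋃ n, t n, iUnion_subset fun n => (ht n).1, countable_iUnion fun n => (ht n).2,
    fun u hus huc => ?_⟩
  have hsup : sSup S ≤ f (⋃ n, t n) :=
    le_of_tendsto' hv_lim fun n => hft n ▸ hf (subset_iUnion t n)
  exact (le_sSup (show f u ∈ S from ⟨u, ⟨hus, huc⟩, rfl⟩)).trans hsup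

namespace MeasureTheory

variable {X : Type*} [MeasurableSpace X] {μ : Measure X}

theorem exists_countable_subset_measure_inter_diff_sUnion_eq_zero {𝓕 : Set (Set X)}
    (h𝓕 : ∀ F ∈ 𝓕, MeasurableSet F) {A : Set X} (hA : μ A ≠ ∞) :
    ∃ 𝓖 ⊆ 𝓕, 𝓖.Countable ∧ ∀ F ∈ 𝓕, μ (F ∩ (A \ ⋃₀ 𝓖)) = 0 := by
  have hmono : Monotone fun 𝓗 : Set (Set X) => μ (A ∩ ⋃₀ 𝓗) :=
    fun _ _ h => measure_mono (inter_subset_inter_right A (sUnion_mono h))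
  obtain ⟨𝓖, h𝓖𝓕, h𝓖c, hmax⟩ := hmono.exists_countable_subset_forall_countable_le 𝓕
  refine ⟨𝓖, h𝓖𝓕, h𝓖c, fun F hF => ?_⟩
  have hU : MeasurableSet (⋃₀ 𝓖) := .sUnion h𝓖c fun G hG => h𝓕 G (h𝓖𝓕 hG)
  have hsplit : μ (A ∩ ⋃₀ 𝓖) + μ (F ∩ (A \ ⋃₀ 𝓖)) = μ (A ∩ ⋃₀ insert F 𝓖) := by
    rw [← measure_inter_add_sdiff (A ∩ ⋃₀ insert F 𝓖) hU, sUnion_insert]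
    congr 2 <;> ext x <;> simp only [mem_inter_iff, mem_union, mem_sdiff] <;> tauto
  have hle : μ (A ∩ ⋃₀ 𝓖) + μ (F ∩ (A \ ⋃₀ 𝓖)) ≤ μ (A ∩ ⋃₀ 𝓖) :=
    hsplit ▸ hmax _ (insert_subset hF h𝓖𝓕) (h𝓖c.insert F)
  have hfin : μ (A ∩ ⋃₀ 𝓖) ≠ ∞ := measure_ne_top_of_subset inter_subset_left hA
  exact nonpos_iff_eq_zero.mp ((ENNReal.cancel_of_ne hfin).add_le_iff_nonpos_right.mp hle)

end MeasureTheory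

theorem stmt_11_general {X : Type*} [MeasurableSpace X] (μ : Measure X)
    (𝓕 : Set (Set X))
    (h𝓕 : ∀ F ∈ 𝓕, MeasurableSet F ∧ 0 < μ F ∧ μ F < ∞)
    (A : Set X) (hA : MeasurableSet A) (hAfin : μ A < ∞)
    (hno : ¬ ∃ 𝓕₀ : Set (Set X), 𝓕₀ ⊆ 𝓕 ∧ 𝓕₀.Countable ∧ μ (A \ ⋃₀ 𝓕₀) = 0) :
    ∃ E : Set X, MeasurableSet E ∧ E ⊆ A ∧ 0 < μ E ∧ ∀ F ∈ 𝓕, μ (F ∩ E) = 0 := by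
  obtain ⟨𝓖, h𝓖𝓕, h𝓖c, hnull⟩ :=
    exists_countable_subset_measure_inter_diff_sUnion_eq_zero (μ := μ)
      (fun F hF => (h𝓕 F hF).1) hAfin.ne
  have hU : MeasurableSet (⋃₀ 𝓖) := .sUnion h𝓖c fun G hG => (h𝓕 G (h𝓖𝓕 hG)).1
  refine ⟨A \ ⋃₀ 𝓖, hA.diff hU, sdiff_subset, ?_, hnull⟩
  exact pos_iff_ne_zero.mpr fun h => hno ⟨𝓖, h𝓖𝓕, h𝓖c, h⟩

/-- If a family `𝓕` of sets of positive finite measure admits no countable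
subfamily essentially covering `A ∈ 𝓜*`, then there is a measurable `E ⊆ A` of positive
measure with `μ(F ∩ E) = 0` for every `F ∈ 𝓕`. -/
theorem stmt_11 {X : Type*} [MeasurableSpace X] (μ : Measure X)
    (𝓕 : Set (Set X))
    (h𝓕 : ∀ F ∈ 𝓕, MeasurableSet F ∧ 0 < μ F ∧ μ F < ∞)
    (A : Set X) (hA : MeasurableSet A) (hApos : 0 < μ A) (hAfin : μ A < ∞)
    (hno : ¬ ∃ 𝓕₀ : Set (Set X), 𝓕₀ ⊆ 𝓕 ∧ 𝓕₀.Countable ∧ μ (A \ ⋃₀ 𝓕₀) = 0) :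
    ∃ E : Set X, MeasurableSet E ∧ E ⊆ A ∧ 0 < μ E ∧ ∀ F ∈ 𝓕, μ (F ∩ E) = 0 :=
  stmt_11_general μ 𝓕 h𝓕 A hA hAfin hno
end

section
/- Let $\mathscr{G}_\varepsilon = \{G\in\mathscr{G} : \mu(G)<\varepsilon\}$. The following are equivalent: (i) for every measurable $A$ with $0<\mu(A)<\infty$ and every $\varepsilon>0$, there exists $G\in\mathscr{G}_\varepsilon$ with $\mu(G\cap A)>0$; (ii) for every measurable $A$ with $0<\mu(A)<\infty$ and every $\varepsilon>0$, $\mathscr{G}_\varepsilon$ admits a countable subfamily covering $A$ up to a null set. -/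
open MeasureTheory ENNReal

/-! Among the countable subfamilies `𝒞` of `𝒢_ε`, choose one for which `μ (A ∩ ⋃₀ 𝒞)` is
maximal; the supremum is attained because a countable union of countable families is
countable. If `A \ ⋃₀ 𝒞` had positive measure, (i) would give a `G ∈ 𝒢_ε` meeting it in positive
measure, and adding `G` to `𝒞` would increase the finite quantity `μ (A ∩ ⋃₀ 𝒞)`. -/

theorem Monotone.exists_countable_subset_forall_le_sUnion {X : Type*} {m : Set X → ℝ≥0∞}
    (hm : Monotone m) (S : Set (Set X)) :
    ∃ 𝒞 ⊆ S, 𝒞.Countable ∧ ∀ 𝒟 ⊆ S, 𝒟.Countable → m (⋃₀ 𝒟) ≤ m (⋃₀ 𝒞) := by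
  set values : Set ℝ≥0∞ := {v | ∃ 𝒟 ⊆ S, 𝒟.Countable ∧ m (⋃₀ 𝒟) = v}
  obtain ⟨u, -, hu_lim, hu_mem⟩ :=
    exists_seq_tendsto_sSup (S := values) ⟨_, ∅, Set.empty_subset S, Set.countable_empty, rfl⟩
      (OrderTop.bddAbove _)
  choose 𝒟 h𝒟S h𝒟c h𝒟u using hu_mem
  refine ⟨⋃ n, 𝒟 n, Set.iUnion_subset h𝒟S, Set.countable_iUnion h𝒟c, fun 𝒟' h𝒟'S h𝒟'c => ?_⟩
  have hle : ∀ n, u n ≤ m (⋃₀ ⋃ n, 𝒟 n) := fun n =>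
    h𝒟u n ▸ hm (Set.sUnion_mono (Set.subset_iUnion 𝒟 n))
  calc m (⋃₀ 𝒟') ≤ sSup values := le_sSup ⟨𝒟', h𝒟'S, h𝒟'c, rfl⟩
    _ ≤ m (⋃₀ ⋃ n, 𝒟 n) := le_of_tendsto' hu_lim hle

theorem exists_countable_subset_measure_sdiff_sUnion_eq_zero {X : Type*} [MeasurableSpace X]
    {μ : Measure X} {S : Set (Set X)} (hS : ∀ G ∈ S, MeasurableSet G) {A : Set X}
    (hA : MeasurableSet A) (hA_fin : μ A ≠ ∞)
    (h_meets : ∀ R ⊆ A, MeasurableSet R → 0 < μ R → ∃ G ∈ S, 0 < μ (G ∩ R)) :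
    ∃ 𝒞 ⊆ S, 𝒞.Countable ∧ μ (A \ ⋃₀ 𝒞) = 0 := by
  have hmono : Monotone fun U => μ (A ∩ U) := fun U V hUV =>
    measure_mono (Set.inter_subset_inter_right A hUV)
  obtain ⟨𝒞, h𝒞S, h𝒞c, h𝒞max⟩ := hmono.exists_countable_subset_forall_le_sUnion S
  refine ⟨𝒞, h𝒞S, h𝒞c, ?_⟩
  set U := ⋃₀ 𝒞
  have hU : MeasurableSet U := MeasurableSet.sUnion h𝒞c fun G hG => hS G (h𝒞S hG)
  by_contra hpos
  obtain ⟨G, hGS, hG⟩ := h_meets (A \ U) Set.sdiff_subset (hA.diff hU) (pos_iff_ne_zero.2 hpos)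
  have hgain : μ (A ∩ U) + μ (G ∩ (A \ U)) ≤ μ (A ∩ U) + 0 := calc
    μ (A ∩ U) + μ (G ∩ (A \ U)) = μ (A ∩ U ∪ G ∩ (A \ U)) :=
      (measure_union (Set.disjoint_left.2 fun _ hx hx' => hx'.2.2 hx.2)
        ((hS G hGS).inter (hA.diff hU))).symm
    _ ≤ μ (A ∩ ⋃₀ insert G 𝒞) := measure_mono <| by
      rw [Set.sUnion_insert]
      rintro x (⟨hxA, hxU⟩ | ⟨hxG, hxA, -⟩)
      exacts [⟨hxA, .inr hxU⟩, ⟨hxA, .inl hxG⟩]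
    _ ≤ μ (A ∩ U) + 0 := by
      rw [add_zero]
      exact h𝒞max _ (Set.insert_subset hGS h𝒞S) (h𝒞c.insert G)
  exact hG.ne' (nonpos_iff_eq_zero.1 <| ENNReal.le_of_add_le_add_left
    (measure_ne_top_of_subset Set.inter_subset_left hA_fin) hgain)

theorem exists_mem_measure_inter_pos_of_measure_sdiff_sUnion_eq_zero {X : Type*}
    [MeasurableSpace X] {μ : Measure X} {𝒞 : Set (Set X)} (h𝒞 : 𝒞.Countable) {A : Set X}
    (hA : 0 < μ A) (h_cover : μ (A \ ⋃₀ 𝒞) = 0) : ∃ G ∈ 𝒞, 0 < μ (G ∩ A) := by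
  by_contra! h_null
  have h_inter : μ (A ∩ ⋃₀ 𝒞) = 0 := by
    rw [Set.sUnion_eq_biUnion, Set.inter_iUnion₂, measure_biUnion_null_iff h𝒞]
    intro G hG
    rw [Set.inter_comm]
    exact nonpos_iff_eq_zero.1 (h_null G hG)
  have h_split := measure_le_inter_add_sdiff μ A (⋃₀ 𝒞)
  rw [h_inter, h_cover, add_zero] at h_split
  exact hA.ne' (nonpos_iff_eq_zero.1 h_split)

/-- With `𝒢_ε = {G ∈ 𝒢 : μ G < ε}`, the following are equivalent:
(i) every `A ∈ 𝓜*` meets some member of `𝒢_ε` in positive measure, for every `ε > 0`;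
(ii) every `A ∈ 𝓜*` admits a countable essential cover from `𝒢_ε`, for every `ε > 0`. -/
theorem stmt_12 {X : Type*} [MeasurableSpace X] (μ : Measure X)
    (𝒢 : Set (Set X))
    (h𝒢 : ∀ G ∈ 𝒢, MeasurableSet G ∧ 0 < μ G ∧ μ G < ∞) :
    (∀ A : Set X, MeasurableSet A → 0 < μ A → μ A < ∞ → ∀ ε : ℝ≥0∞, 0 < ε →
        ∃ G ∈ 𝒢, μ G < ε ∧ 0 < μ (G ∩ A)) ↔
    (∀ A : Set X, MeasurableSet A → 0 < μ A → μ A < ∞ → ∀ ε : ℝ≥0∞, 0 < ε →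
        ∃ 𝒢₀ : Set (Set X), 𝒢₀ ⊆ {G ∈ 𝒢 | μ G < ε} ∧ 𝒢₀.Countable ∧
          μ (A \ ⋃₀ 𝒢₀) = 0) := by
  constructor
  · intro h_meets A hA _ hA_fin ε hε
    refine exists_countable_subset_measure_sdiff_sUnion_eq_zero (fun G hG => (h𝒢 G hG.1).1) hA
      hA_fin.ne fun R hRA hR hR_pos => ?_
    obtain ⟨G, hG, hGε, hGR⟩ :=
      h_meets R hR hR_pos ((measure_mono hRA).trans_lt hA_fin) ε hε
    exact ⟨G, ⟨hG, hGε⟩, hGR⟩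
  · intro h_cover A hA hA_pos hA_fin ε hε
    obtain ⟨𝒢₀, h𝒢₀, h𝒢₀c, h𝒢₀_cover⟩ := h_cover A hA hA_pos hA_fin ε hε
    obtain ⟨G, hG, hGA⟩ :=
      exists_mem_measure_inter_pos_of_measure_sdiff_sUnion_eq_zero h𝒢₀c hA_pos h𝒢₀_cover
    exact ⟨G, (h𝒢₀ hG).1, (h𝒢₀ hG).2, hGA⟩
end

section
/- Let $\{E_n\}_{n\ge 1}$ be pairwise disjoint measurable sets with $0<\mu(E_n)\le 2^{-(n^2+1)}$ for all $n$, all contained in some $G_0\in\mathscr{G}$, and suppose $\alpha := \inf\{\mu(G) : G\in\mathscr{G},\ \mu(G\cap E)>0\} > 0$ where $E=\bigcup_n E_n$. Then the function $f = \sum_{n=1}^\infty \frac{2^{-n}}{\mu(E_n)}\chi_{E_n}$ satisfies $\|f\|_{BMO_\mathscr{G}} \le 2/\alpha$, but $\int_{G_0} |f|^2\,d\mu = \infty$, so $f\in BMO_\mathscr{G}(\mathbb{X})\setminus L^2_{loc}(\mathbb{X},\mathscr{G})$. -/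
/-!
The mean oscillation of any function over a set is at most twice its mean absolute value there.
Since `f ≥ 0` has total integral `∑ 2^{-n} = 1` and vanishes off `E`, its mean oscillation over
`G ∈ 𝒢` is `0` when `μ (G ∩ E) = 0` and at most `2 / μ G ≤ 2 / α` otherwise. On the other hand
`∫_{E_n} f² = 4^{-n} / μ(E_n) ≥ 2^{(n-1)²} ≥ 1` for every `n`, so `∫_{G₀} f² = ∞`.
-/
open MeasureTheory ENNReal Set Function

section Oscillation
variable {α E : Type*} [MeasurableSpace α] [NormedAddCommGroup E] [NormedSpace ℝ E]

theorem lintegral_enorm_sub_integral_le {P : Measure α} (hP : P univ ≤ 1) (f : α → E) :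
    ∫⁻ x, ‖f x - ∫ y, f y ∂P‖ₑ ∂P ≤ 2 * ∫⁻ x, ‖f x‖ₑ ∂P :=
  calc ∫⁻ x, ‖f x - ∫ y, f y ∂P‖ₑ ∂P
      ≤ ∫⁻ x, ‖f x‖ₑ + ‖∫ y, f y ∂P‖ₑ ∂P := lintegral_mono fun _ => enorm_sub_le
    _ = ∫⁻ x, ‖f x‖ₑ ∂P + ‖∫ y, f y ∂P‖ₑ * P univ := by
        rw [lintegral_add_right _ measurable_const, lintegral_const]
    _ ≤ ∫⁻ x, ‖f x‖ₑ ∂P + ∫⁻ x, ‖f x‖ₑ ∂P := by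
        gcongr
        exact (mul_le_of_le_one_right' hP).trans (enorm_integral_le_lintegral_enorm f)
    _ = 2 * ∫⁻ x, ‖f x‖ₑ ∂P := (two_mul _).symm

theorem laverage_enorm_sub_average_le (μ : Measure α) (f : α → E) :
    ⨍⁻ x, ‖f x - ⨍ y, f y ∂μ‖ₑ ∂μ ≤ 2 * ⨍⁻ x, ‖f x‖ₑ ∂μ :=
  -- `(μ univ)⁻¹ • μ` has mass at most one, also when `μ univ` is `0` or `∞`
  lintegral_enorm_sub_integral_le (by simp) f

end Oscillation

section IndicatorSeries
variable {ι X M : Type*} [AddCommMonoid M] [TopologicalSpace M] {s : ι → Set X}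

theorem tsum_indicator_apply_of_mem (hs : Pairwise (Disjoint on s)) (c : ι → M) {i : ι} {x : X}
    (hx : x ∈ s i) : ∑' n, (s n).indicator (fun _ => c n) x = c i := by
  rw [tsum_eq_single i fun n hn => indicator_of_notMem (disjoint_right.mp (hs hn) hx) _,
    indicator_of_mem hx]

theorem tsum_indicator_apply_of_notMem (c : ι → M) {x : X} (hx : x ∉ ⋃ i, s i) :
    ∑' n, (s n).indicator (fun _ => c n) x = 0 := by
  simp_all

theorem map_tsum_indicator_apply {N : Type*} [AddCommMonoid N] [TopologicalSpace N]
    (hs : Pairwise (Disjoint on s)) (c : ι → M) {φ : M → N} (hφ : φ 0 = 0) (x : X) :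
    φ (∑' n, (s n).indicator (fun _ => c n) x) = ∑' n, (s n).indicator (fun _ => φ (c n)) x := by
  by_cases hx : x ∈ ⋃ i, s i
  · obtain ⟨i, hi⟩ := mem_iUnion.mp hx
    rw [tsum_indicator_apply_of_mem hs c hi, tsum_indicator_apply_of_mem hs _ hi]
  · rw [tsum_indicator_apply_of_notMem c hx, tsum_indicator_apply_of_notMem _ hx, hφ]

theorem lintegral_comp_tsum_indicator [Countable ι] [MeasurableSpace X] (μ : Measure X)
    (hs_meas : ∀ i, MeasurableSet (s i)) (hs : Pairwise (Disjoint on s)) (c : ι → M)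
    {φ : M → ℝ≥0∞} (hφ : φ 0 = 0) :
    ∫⁻ x, φ (∑' i, (s i).indicator (fun _ => c i) x) ∂μ = ∑' i, φ (c i) * μ (s i) := by
  simp_rw [map_tsum_indicator_apply hs c hφ]
  rw [lintegral_tsum fun i => (measurable_const.indicator (hs_meas i)).aemeasurable]
  simp_rw [lintegral_indicator_const (hs_meas _)]

end IndicatorSeries

theorem iSup_setLAverage_enorm_sub_le {X E : Type*} [MeasurableSpace X] [NormedAddCommGroup E]
    [NormedSpace ℝ E] {μ : Measure X} {𝒢 : Set (Set X)} {f : X → E} {S : Set X}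
    (hS : MeasurableSet S) (hf : ∀ x ∉ S, f x = 0) {C m : ℝ≥0∞}
    (hC : ∫⁻ x, ‖f x‖ₑ ∂μ ≤ C) (h𝒢 : ∀ G ∈ 𝒢, 0 < μ (G ∩ S) → m ≤ μ G) :
    ⨆ G ∈ 𝒢, ⨍⁻ x in G, ‖f x - ⨍ y in G, f y ∂μ‖ₑ ∂μ ≤ 2 * (C / m) := by
  refine iSup₂_le fun G hG => (laverage_enorm_sub_average_le _ f).trans ?_
  rw [setLAverage_eq]
  rcases eq_zero_or_pos (μ (G ∩ S)) with hGS | hGS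
  · have hS_null : μ.restrict G S = 0 := by rwa [Measure.restrict_apply hS, inter_comm]
    have hf_ae : ∀ᵐ x ∂μ.restrict G, ‖f x‖ₑ = 0 :=
      (measure_eq_zero_iff_ae_notMem.mp hS_null).mono fun x hx => by simp [hf x hx]
    simp [lintegral_congr_ae hf_ae]
  · gcongr
    exacts [hC.trans' (setLIntegral_le_lintegral _ _), h𝒢 G hG hGS]

theorem enorm_div_toReal_mul_self (r : ℝ) {m : ℝ≥0∞} (h0 : m ≠ 0) (htop : m ≠ ∞) :
    ‖r / m.toReal‖ₑ * m = ‖r‖ₑ := by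
  rw [Real.enorm_eq_ofReal_abs, abs_div, abs_of_nonneg toReal_nonneg,
    ofReal_div_of_pos (toReal_pos h0 htop), ofReal_toReal htop, ENNReal.div_mul_cancel h0 htop,
    Real.enorm_eq_ofReal_abs]

theorem one_le_ofReal_sq_div_toReal_mul {r : ℝ} {m : ℝ≥0∞} (h0 : m ≠ 0)
    (hm : m ≤ ENNReal.ofReal (r ^ 2)) : 1 ≤ ENNReal.ofReal ((r / m.toReal) ^ 2) * m := by
  have htop : m ≠ ∞ := ne_top_of_le_ne_top ofReal_ne_top hm
  have hpos : 0 < m.toReal := toReal_pos h0 htop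
  have hle : m.toReal ≤ r ^ 2 := by
    simpa [toReal_ofReal (sq_nonneg r)] using toReal_mono ofReal_ne_top hm
  calc 1 ≤ ENNReal.ofReal ((r / m.toReal) ^ 2 * m.toReal) := by
        rw [← ofReal_one, div_pow, div_mul_eq_mul_div, pow_two m.toReal,
          mul_div_mul_right _ _ hpos.ne']
        exact ofReal_le_ofReal ((one_le_div hpos).mpr hle)
    _ = ENNReal.ofReal ((r / m.toReal) ^ 2) * m := by
        rw [ofReal_mul (sq_nonneg _), ofReal_toReal htop]

theorem tsum_enorm_half_pow_succ : ∑' n : ℕ, ‖((1 : ℝ) / 2) ^ (n + 1)‖ₑ = 1 := by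
  have half : ‖(1 / 2 : ℝ)‖ₑ = 2⁻¹ := by simp [Real.enorm_eq_ofReal_abs]
  simp_rw [enorm_pow, half, ENNReal.tsum_geometric_add_one, one_sub_inv_two, inv_inv]
  exact ENNReal.inv_mul_cancel two_ne_zero ofNat_ne_top

theorem half_pow_sq_add_one_le (n : ℕ) :
    ((1 : ℝ≥0∞) / 2) ^ ((n + 1) ^ 2 + 1) ≤ ENNReal.ofReal ((((1 : ℝ) / 2) ^ (n + 1)) ^ 2) := by
  rw [← pow_mul, ofReal_pow (by norm_num), ofReal_div_of_pos two_pos, ofReal_one, ofReal_ofNat]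
  exact pow_le_pow_right_of_le_one' (by norm_num) (by nlinarith)

theorem stmt_13_general {X : Type*} [MeasurableSpace X] (μ : Measure X)
    (𝒢 : Set (Set X))
    (G₀ : Set X)
    (E : ℕ → Set X)
    (hEmeas : ∀ n, 1 ≤ n → MeasurableSet (E n))
    (hEdisj : ∀ m n, 1 ≤ m → 1 ≤ n → m ≠ n → Disjoint (E m) (E n))
    (hEpos : ∀ n, 1 ≤ n → 0 < μ (E n))
    (hEsmall : ∀ n, 1 ≤ n → μ (E n) ≤ ((1 : ℝ≥0∞) / 2) ^ (n ^ 2 + 1))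
    (hEsub : ∀ n, 1 ≤ n → E n ⊆ G₀)
    (a : ℝ) (ha : 0 < a)
    (hinf : ∀ G ∈ 𝒢, 0 < μ (G ∩ ⋃ n : ℕ, E (n + 1)) → ENNReal.ofReal a ≤ μ G)
    (f : X → ℝ)
    (hfdef : f = fun x => ∑' n : ℕ,
      (E (n + 1)).indicator (fun _ => ((1 : ℝ) / 2) ^ (n + 1) / (μ (E (n + 1))).toReal) x) :
    (⨆ G ∈ 𝒢, ⨍⁻ x in G, ENNReal.ofReal |f x - ⨍ y in G, f y ∂μ| ∂μ) ≤
      ENNReal.ofReal (2 / a) ∧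
    ∫⁻ x in G₀, ENNReal.ofReal ((f x) ^ 2) ∂μ = ∞ := by
  subst hfdef
  set s : ℕ → Set X := fun n => E (n + 1)
  set c : ℕ → ℝ := fun n => ((1 : ℝ) / 2) ^ (n + 1) / (μ (s n)).toReal
  have hs_meas : ∀ n, MeasurableSet (s n) := fun n => hEmeas (n + 1) n.succ_pos
  have hs_disj : Pairwise (Disjoint on s) := fun m n hmn =>
    hEdisj (m + 1) (n + 1) (by omega) (by omega) (by omega)
  have hs_pos : ∀ n, μ (s n) ≠ 0 := fun n => (hEpos (n + 1) n.succ_pos).ne'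
  have hs_small : ∀ n, μ (s n) ≤ ENNReal.ofReal ((((1 : ℝ) / 2) ^ (n + 1)) ^ 2) := fun n =>
    (hEsmall (n + 1) n.succ_pos).trans (half_pow_sq_add_one_le n)
  have hs_fin : ∀ n, μ (s n) ≠ ∞ := fun n => ne_top_of_le_ne_top ofReal_ne_top (hs_small n)
  constructor
  · have hmass : ∫⁻ x, ‖∑' n, (s n).indicator (fun _ => c n) x‖ₑ ∂μ = 1 := by
      rw [lintegral_comp_tsum_indicator μ hs_meas hs_disj c enorm_zero]
      simp_rw [c, enorm_div_toReal_mul_self _ (hs_pos _) (hs_fin _)]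
      exact tsum_enorm_half_pow_succ
    simp_rw [← Real.enorm_eq_ofReal_abs]
    refine (iSup_setLAverage_enorm_sub_le (MeasurableSet.iUnion hs_meas)
      (fun x hx => tsum_indicator_apply_of_notMem c hx) hmass.le hinf).trans_eq ?_
    rw [ofReal_div_of_pos ha, ofReal_ofNat, mul_one_div]
  · have hs_restrict : ∀ n, μ.restrict G₀ (s n) = μ (s n) := fun n =>
      Measure.restrict_eq_self _ (hEsub (n + 1) n.succ_pos)
    rw [lintegral_comp_tsum_indicator (μ.restrict G₀) hs_meas hs_disj c
      (φ := fun r => ENNReal.ofReal (r ^ 2)) (by simp)]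
    simp_rw [hs_restrict]
    exact top_unique <| (ENNReal.tsum_const_eq_top_of_ne_zero one_ne_zero).symm.le.trans <|
      ENNReal.tsum_le_tsum fun n => one_le_ofReal_sq_div_toReal_mul (hs_pos n) (hs_small n)

/-- Given pairwise disjoint sets `E_n ⊆ G₀` (n ≥ 1) with
`0 < μ(E_n) ≤ 2^{-(n²+1)}`, and `α ≥ a > 0` a lower bound on the measure of any generator
meeting `E = ⋃ E_n` in positive measure, the function `f = ∑ 2^{-n}/μ(E_n) χ_{E_n}`
satisfies `‖f‖_{BMO_𝒢} ≤ 2/a` but `∫_{G₀} |f|² dμ = ∞`. -/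
theorem stmt_13 {X : Type*} [MeasurableSpace X] (μ : Measure X)
    (𝒢 : Set (Set X))
    (h𝒢 : ∀ G ∈ 𝒢, MeasurableSet G ∧ 0 < μ G ∧ μ G < ∞)
    (G₀ : Set X) (hG₀ : G₀ ∈ 𝒢)
    (E : ℕ → Set X)
    (hEmeas : ∀ n, 1 ≤ n → MeasurableSet (E n))
    (hEdisj : ∀ m n, 1 ≤ m → 1 ≤ n → m ≠ n → Disjoint (E m) (E n))
    (hEpos : ∀ n, 1 ≤ n → 0 < μ (E n))
    (hEsmall : ∀ n, 1 ≤ n → μ (E n) ≤ ((1 : ℝ≥0∞) / 2) ^ (n ^ 2 + 1))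
    (hEsub : ∀ n, 1 ≤ n → E n ⊆ G₀)
    (a : ℝ) (ha : 0 < a)
    (hinf : ∀ G ∈ 𝒢, 0 < μ (G ∩ ⋃ n : ℕ, E (n + 1)) → ENNReal.ofReal a ≤ μ G)
    (f : X → ℝ)
    (hfdef : f = fun x => ∑' n : ℕ,
      (E (n + 1)).indicator (fun _ => ((1 : ℝ) / 2) ^ (n + 1) / (μ (E (n + 1))).toReal) x) :
    (⨆ G ∈ 𝒢, ⨍⁻ x in G, ENNReal.ofReal |f x - ⨍ y in G, f y ∂μ| ∂μ) ≤
      ENNReal.ofReal (2 / a) ∧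
    ∫⁻ x in G₀, ENNReal.ofReal ((f x) ^ 2) ∂μ = ∞ :=
  stmt_13_general μ 𝒢 G₀ E hEmeas hEdisj hEpos hEsmall hEsub a ha hinf f hfdef
end

section
/- Let $X=(0,1)^2$ with Lebesgue measure and $\mathscr{G}=\{(c,d)\times(0,1) : 0\le c<d\le 1\}$. The function $f(x,y)=y^{-1/2}$ satisfies $\fint_R |f|\,d\mu = 2$ for every $R\in\mathscr{G}$ (hence $\|f\|_{BMO_\mathscr{G}} \le 4$ and $f\in BMO_\mathscr{G}$), but $\int_R |f|^2\,d\mu=\infty$ for every $R\in\mathscr{G}$, so $f\notin L^2_{loc}(\mathbb{X},\mathscr{G})$. -/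
/-!
A function of the second coordinate alone has, on a strip `(c, d) × (0, 1)`, the same averages as
its one-variable profile on `(0, 1)`. For `y ^ (-1/2)` that average is `∫₀¹ y ^ (-1/2) dy = 2`,
while its square `y⁻¹` has infinite integral near `0`. The BMO bound is the general estimate
`⨍ |f - ⨍ f| ≤ 2 ⨍ |f|`.
-/

open MeasureTheory ENNReal Real Set

section Average

variable {α : Type*} [MeasurableSpace α] {μ : Measure α} [IsFiniteMeasure μ]

theorem integral_abs_sub_average_le {f : α → ℝ} (hf : Integrable f μ) :
    ∫ x, |f x - ⨍ y, f y ∂μ| ∂μ ≤ 2 * ∫ x, |f x| ∂μ := by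
  set a := ⨍ y, f y ∂μ
  have hmass : μ.real univ * |a| ≤ ∫ x, |f x| ∂μ := by
    rw [← abs_of_nonneg (measureReal_nonneg (μ := μ) (s := univ)), ← abs_mul, ← smul_eq_mul,
      measure_smul_average]
    exact abs_integral_le_integral_abs
  calc ∫ x, |f x - a| ∂μ ≤ ∫ x, (|f x| + |a|) ∂μ :=
        integral_mono (hf.sub (integrable_const a)).abs (hf.abs.add (integrable_const _))
          fun x => abs_sub _ _
    _ = ∫ x, |f x| ∂μ + μ.real univ * |a| := by
        rw [integral_add hf.abs (integrable_const _), integral_const, smul_eq_mul]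
    _ ≤ 2 * ∫ x, |f x| ∂μ := by linarith

theorem average_abs_sub_average_le {f : α → ℝ} (hf : Integrable f μ) :
    ⨍ x, |f x - ⨍ y, f y ∂μ| ∂μ ≤ 2 * ⨍ x, |f x| ∂μ := by
  rw [average_eq μ fun x => |f x - ⨍ y, f y ∂μ|, average_eq μ fun x => |f x|, smul_eq_mul,
    smul_eq_mul, mul_left_comm]
  exact mul_le_mul_of_nonneg_left (integral_abs_sub_average_le hf) (by positivity)

end Average

section Prod

variable {α β : Type*} [MeasurableSpace α] [MeasurableSpace β] {μ : Measure α}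
  {ν : Measure β}

theorem average_fun_snd [IsFiniteMeasure μ] [NeZero μ] [SFinite ν] {E : Type*}
    [NormedAddCommGroup E] [NormedSpace ℝ E] (g : β → E) :
    ⨍ z, g z.2 ∂μ.prod ν = ⨍ y, g y ∂ν := by
  have hμ : μ.real univ ≠ 0 := measureReal_univ_pos.ne'
  rw [average_eq, average_eq, integral_fun_snd, ← univ_prod_univ, measureReal_prod_prod,
    smul_smul]
  congr 1
  field_simp

theorem lintegral_fun_snd [SFinite ν] {g : β → ℝ≥0∞} (hg : AEMeasurable g ν) :
    ∫⁻ z, g z.2 ∂μ.prod ν = μ univ * ∫⁻ y, g y ∂ν := by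
  simpa using lintegral_prod_mul (f := fun _ : α => (1 : ℝ≥0∞)) aemeasurable_const hg

end Prod

theorem integral_Ioo_zero_one_rpow {r : ℝ} (hr : -1 < r) :
    ∫ y in Ioo (0 : ℝ) 1, y ^ r = (r + 1)⁻¹ := by
  rw [← integral_Ioc_eq_integral_Ioo, ← intervalIntegral.integral_of_le zero_le_one,
    integral_rpow (Or.inl hr), zero_rpow (by linarith), Real.one_rpow, sub_zero, one_div]

theorem lintegral_Ioo_zero_one_rpow_eq_top {r : ℝ} (hr : r ≤ -1) :
    ∫⁻ y in Ioo (0 : ℝ) 1, ENNReal.ofReal (y ^ r) = ∞ := by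
  by_contra h
  have hnonneg : 0 ≤ᵐ[volume.restrict (Ioo (0 : ℝ) 1)] fun y => y ^ r := by
    filter_upwards [self_mem_ae_restrict measurableSet_Ioo] with y hy
    exact rpow_nonneg hy.1.le r
  have hintegrable := (lintegral_ofReal_ne_top_iff_integrable
    (by fun_prop : Measurable fun y : ℝ => y ^ r).aestronglyMeasurable hnonneg).1 h
  rw [← IntegrableOn, intervalIntegral.integrableOn_Ioo_rpow_iff one_pos] at hintegrable
  linarith

/-- On `(0,1)²` with Lebesgue measure and generators the vertical strips
`(c,d) × (0,1)`, the function `f(x,y) = y^{-1/2}` has `⨍_R |f| = 2` on every generator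
(hence `‖f‖_{BMO_𝒢} ≤ 4`, so `f ∈ BMO_𝒢`), yet `∫_R |f|² = ∞` on every generator,
so `f ∉ L²_loc(𝕏,𝒢)`. -/
theorem stmt_14
    (f : ℝ × ℝ → ℝ) (hf : f = fun p => p.2 ^ (-(1 / 2) : ℝ)) :
    ∀ c d : ℝ, 0 ≤ c → c < d → d ≤ 1 →
      (⨍ p in Ioo c d ×ˢ Ioo (0 : ℝ) 1, |f p| ∂(volume : Measure (ℝ × ℝ))) = 2 ∧
      (⨍ p in Ioo c d ×ˢ Ioo (0 : ℝ) 1,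
          |f p - ⨍ q in Ioo c d ×ˢ Ioo (0 : ℝ) 1, f q ∂(volume : Measure (ℝ × ℝ))|
          ∂(volume : Measure (ℝ × ℝ))) ≤ 4 ∧
      ∫⁻ p in Ioo c d ×ˢ Ioo (0 : ℝ) 1,
          ENNReal.ofReal ((f p) ^ 2) ∂(volume : Measure (ℝ × ℝ)) = ∞ := by
  intro c d _ hcd _
  subst hf
  set μ := volume.restrict (Ioo c d)
  set ν := volume.restrict (Ioo (0 : ℝ) 1)
  have hstrip : (volume : Measure (ℝ × ℝ)).restrict (Ioo c d ×ˢ Ioo 0 1) = μ.prod ν := by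
    rw [Measure.volume_eq_prod, Measure.prod_restrict]
  have : IsFiniteMeasure μ := isFiniteMeasure_restrict.2 measure_Ioo_lt_top.ne
  have : NeZero μ := ⟨by simp [μ, hcd]⟩
  have hintegrable : Integrable (fun y : ℝ => y ^ (-(1 / 2) : ℝ)) ν :=
    (intervalIntegral.integrableOn_Ioo_rpow_iff one_pos).2 (by norm_num)
  have havg : ⨍ y, |y ^ (-(1 / 2) : ℝ)| ∂ν = 2 := by
    rw [average_eq, setIntegral_congr_fun measurableSet_Ioo fun y hy => abs_of_nonneg
      (rpow_nonneg hy.1.le _), integral_Ioo_zero_one_rpow (by norm_num)]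
    norm_num [ν]
  have hsq : ∫⁻ y, ENNReal.ofReal ((y ^ (-(1 / 2) : ℝ)) ^ 2) ∂ν = ∞ := by
    rw [setLIntegral_congr_fun measurableSet_Ioo fun y hy => by
      rw [← rpow_mul_natCast hy.1.le]]
    exact lintegral_Ioo_zero_one_rpow_eq_top (by norm_num)
  simp only [hstrip]
  refine ⟨?_, ?_, ?_⟩
  · rw [average_fun_snd (fun y => |y ^ (-(1 / 2) : ℝ)|), havg]
  · calc _ ≤ 2 * ⨍ z, |z.2 ^ (-(1 / 2) : ℝ)| ∂μ.prod ν :=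
          average_abs_sub_average_le (hintegrable.comp_snd μ)
      _ = 4 := by rw [average_fun_snd (fun y => |y ^ (-(1 / 2) : ℝ)|), havg]; norm_num
  · rw [lintegral_fun_snd (g := fun y => ENNReal.ofReal ((y ^ (-(1 / 2) : ℝ)) ^ 2))
      (by fun_prop), hsq, ENNReal.mul_top (NeZero.ne _)]
end

section
/- Let $(X,\rho)$ be a connected metric space with a Borel measure $\mu$ such that $\mu(B)>0$ for every open ball $B$, and suppose every point has a neighborhood of finite measure. Then every ball that is non-separable has infinite measure; consequently, if additionally every point lies in some open set of finite measure, then every point has a separable ball around it. -/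
/-!
In a metric space, a set whose `ε`-separated subsets are all countable is separable, since a
maximal `ε`-separated subset is an `ε`-net. Inside an open set `U` of finite measure, the points
of an `ε`-separated subset carry pairwise disjoint balls contained in `U`; each ball has positive
measure, so there are only countably many of them. Hence open sets of finite measure, in particular
balls of finite measure, are separable, and every point has a separable ball around it.
-/

open MeasureTheory ENNReal Metric Set
open scoped NNReal

namespace Metric

section PseudoEMetricSpace

variable {X : Type*} [PseudoEMetricSpace X]

theorem exists_maximal_isSeparated (ε : ℝ≥0∞) (s : Set X) :
    ∃ N, Maximal (fun N ↦ N ⊆ s ∧ IsSeparated ε N) N :=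
  zorn_subset {N | N ⊆ s ∧ IsSeparated ε N} fun c hc hchain ↦
    ⟨⋃₀ c, ⟨sUnion_subset fun _ ht ↦ (hc ht).1,
      (pairwise_sUnion hchain.directedOn).2 fun _ ht ↦ (hc ht).2⟩,
      fun _ ↦ subset_sUnion_of_mem⟩

theorem isSeparable_of_forall_isSeparated_countable {s : Set X}
    (h : ∀ ε : ℝ≥0, 0 < ε → ∀ N ⊆ s, IsSeparated ε N → N.Countable) :
    TopologicalSpace.IsSeparable s := by
  obtain ⟨t, -, htc, hst⟩ := EMetric.subset_countable_closure_of_almost_dense_set s fun ε hε ↦ by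
    obtain ⟨δ, hδ, hδε⟩ := ENNReal.lt_iff_exists_nnreal_btwn.1 hε
    obtain ⟨N, hN⟩ := exists_maximal_isSeparated δ s
    refine ⟨N, h δ (mod_cast hδ) N hN.prop.1 hN.prop.2, ?_⟩
    exact (isCover_iff_subset_iUnion_closedEBall.1 (IsCover.of_maximal_isSeparated hN)).trans
      (iUnion₂_mono fun _ _ ↦ closedEBall_subset_closedEBall hδε.le)
  exact ⟨t, htc, hst⟩

end PseudoEMetricSpace

variable {X : Type*} [PseudoMetricSpace X] [MeasurableSpace X] [OpensMeasurableSpace X]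
  {μ : Measure X}

theorem countable_of_pairwiseDisjoint_ball_subset
    (hpos : ∀ (x : X) (r : ℝ), 0 < r → 0 < μ (ball x r)) {N U : Set X} {r : X → ℝ}
    (hr : ∀ z ∈ N, 0 < r z) (hdisj : N.PairwiseDisjoint fun z ↦ ball z (r z))
    (hNU : ∀ z ∈ N, ball z (r z) ⊆ U) (hU : μ U ≠ ∞) : N.Countable := by
  have hcount := Measure.countable_meas_pos_of_disjoint_of_meas_iUnion_ne_top μ
    (fun z : N ↦ measurableSet_ball) (fun a b hab ↦ hdisj a.2 b.2 (Subtype.coe_ne_coe.2 hab))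
    (ne_top_of_le_ne_top hU (measure_mono (iUnion_subset fun z ↦ hNU z z.2)))
  have hall : {z : N | 0 < μ (ball (z : X) (r z))} = univ :=
    eq_univ_of_forall fun z ↦ hpos z (r z) (hr z z.2)
  rw [hall, ← countable_coe_iff] at hcount
  exact countable_coe_iff.1 (countable_univ_iff.1 (countable_coe_iff.2 hcount))

theorem IsOpen.isSeparable_of_measure_ne_top
    (hpos : ∀ (x : X) (r : ℝ), 0 < r → 0 < μ (ball x r)) {U : Set X} (hUo : IsOpen U)
    (hU : μ U ≠ ∞) : TopologicalSpace.IsSeparable U := by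
  refine isSeparable_of_forall_isSeparated_countable fun ε hε N hNU hN ↦ ?_
  choose! r hr hrU using fun z (hz : z ∈ N) ↦ Metric.isOpen_iff.1 hUo z (hNU hz)
  refine countable_of_pairwiseDisjoint_ball_subset hpos (r := fun z ↦ min (r z) (ε / 2))
    (fun z hz ↦ lt_min (hr z hz) (by positivity)) (fun a ha b hb hab ↦ ball_disjoint_ball ?_)
    (fun z hz ↦ (ball_subset_ball (min_le_left _ _)).trans (hrU z hz)) hU
  have hεab : (ε : ℝ) < dist a b := by
    simpa only [edist_dist, ENNReal.coe_lt_ofReal] using hN ha hb hab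
  linarith [min_le_right (r a) (ε / 2), min_le_right (r b) (ε / 2)]

end Metric

theorem stmt_18_general {X : Type*} [MetricSpace X] [MeasurableSpace X] [OpensMeasurableSpace X]
    (μ : Measure X)
    (hpos : ∀ (x : X) (r : ℝ), 0 < r → 0 < μ (ball x r))
    (hfin : ∀ x : X, ∃ U ∈ nhds x, μ U < ∞) :
    (∀ (x : X) (r : ℝ), 0 < r → ¬ TopologicalSpace.IsSeparable (ball x r) →
      μ (ball x r) = ∞) ∧
    ∀ x : X, ∃ r : ℝ, 0 < r ∧ TopologicalSpace.IsSeparable (ball x r) := by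
  refine ⟨fun x r _ hns ↦ ?_, fun x ↦ ?_⟩
  · by_contra hμ
    exact hns (isOpen_ball.isSeparable_of_measure_ne_top hpos hμ)
  · obtain ⟨U, hU, hμU⟩ := hfin x
    obtain ⟨r, hr, hrU⟩ := Metric.mem_nhds_iff.1 hU
    exact ⟨r, hr, isOpen_ball.isSeparable_of_measure_ne_top hpos
      (ne_top_of_le_ne_top hμU.ne (measure_mono hrU))⟩

/-- In a connected metric space with a Borel measure positive on every ball
and such that every point has a neighbourhood of finite measure, every non-separable ball
has infinite measure; consequently every point has a separable ball around it. -/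
theorem stmt_18 {X : Type*} [MetricSpace X] [MeasurableSpace X] [OpensMeasurableSpace X]
    [ConnectedSpace X] (μ : Measure X)
    (hpos : ∀ (x : X) (r : ℝ), 0 < r → 0 < μ (ball x r))
    (hfin : ∀ x : X, ∃ U ∈ nhds x, μ U < ∞) :
    (∀ (x : X) (r : ℝ), 0 < r → ¬ TopologicalSpace.IsSeparable (ball x r) →
      μ (ball x r) = ∞) ∧
    ∀ x : X, ∃ r : ℝ, 0 < r ∧ TopologicalSpace.IsSeparable (ball x r) :=
  stmt_18_general μ hpos hfin
end
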